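/- There exist Büchi automata B and A over {a,b} such that B product-based blindly dominates A but B does not blindly dominate A: there exists a partial resolver g on the A-component of B×A with (B×₁A)^{f,g}(w) ≤ (B×₂A)^{f,g}(w) for all partial resolvers f on the B-component and all words w, yet for every resolver g' of A there exist a resolver f' of B and a word w with B^{f'}(w) > A^{g'}(w). Concretely, A is: s0 --a--> s1, s1 --a--> s2 or s3, s2 --a--> accepting sink, s2 --b--> rejecting sink, s3 --b--> accepting sink, s3 --a--> rejecting sink; B is: q0 --a--> q1 or q2, q1 --a--> q3, q2 --a--> q4, q3 --a--> accepting sink, q3 --b--> rejecting sink, q4 --b--> accepting sink, q4 --a--> rejecting sink (unshown transitions go to a rejecting sink). -/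

import Mathlib

open Filter

/-- A (nondeterministic) Büchi automaton over alphabet `σ` with state type `Q`:
initial state, total transition relation, and set of accepting states. -/
structure BAut (σ : Type) (Q : Type) where
  init : Q
  Δ : Q → σ → Q → Prop
  total : ∀ q a, ∃ q', Δ q a q'
  F : Q → Prop

namespace BAut

variable {σ Q : Type}

/-- The last state of a history. -/
def hlast (A : BAut σ Q) (h : List (σ × Q)) : Q :=
  (h.getLast?.map Prod.snd).getD A.init

/-- A resolver: maps each history and next letter to a successor state consistent with Δ. -/
structure Resolver (A : BAut σ Q) where
  f : List (σ × Q) → σ → Q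
  consistent : ∀ h a, A.Δ (A.hlast h) a (f h a)

/-- The history produced by a resolver on the first `n` letters of a word. -/
def Resolver.hist {A : BAut σ Q} (r : Resolver A) (w : ℕ → σ) : ℕ → List (σ × Q)
  | 0 => []
  | n + 1 => r.hist w n ++ [(w n, r.f (r.hist w n) (w n))]

/-- The unique run induced by a resolver on a word. -/
def Resolver.run {A : BAut σ Q} (r : Resolver A) (w : ℕ → σ) : ℕ → Q
  | 0 => A.init
  | n + 1 => r.f (r.hist w n) (w n)

/-- Büchi acceptance: the run induced by `r` on `w` visits accepting states
infinitely often. -/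
def Acc (A : BAut σ Q) (r : Resolver A) (w : ℕ → σ) : Prop :=
  ∃ᶠ n in atTop, A.F (r.run w n)

/-- `A^f`: the trace property (language) specified by `A` with resolver `f`. -/
def Lang (A : BAut σ Q) (r : Resolver A) : Set (ℕ → σ) := {w | A.Acc r w}

/-- The hyperproperty specified by `A`: the set of trace properties `A^f` for
resolvers `f` of `A`. -/
def Hyper (A : BAut σ Q) : Set (Set (ℕ → σ)) := {P | ∃ r : Resolver A, A.Lang r = P}

end BAut

/-- `P` is a safety property: every word not in `P` has a finite prefix none of whose
extensions is in `P`. -/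
def IsSafety {σ : Type} (P : Set (ℕ → σ)) : Prop :=
  ∀ w, w ∉ P → ∃ n : ℕ, ∀ w' : ℕ → σ, (∀ i < n, w' i = w i) → w' ∉ P

/-- `P` is a co-safety property: every word in `P` has a finite prefix all of whose
extensions are in `P`. -/
def IsCoSafety {σ : Type} (P : Set (ℕ → σ)) : Prop :=
  ∀ w ∈ P, ∃ n : ℕ, ∀ w' : ℕ → σ, (∀ i < n, w' i = w i) → w' ∈ P

namespace BAut

variable {σ QA QB : Type}

/-- Last product state of a product history. -/
def plast (A : BAut σ QA) (B : BAut σ QB) (h : List (σ × (QA × QB))) : QA × QB :=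
  (h.getLast?.map Prod.snd).getD (A.init, B.init)

/-- A partial resolver operating on the first component of the synchronized product. -/
structure PRes1 (A : BAut σ QA) (B : BAut σ QB) where
  f : List (σ × (QA × QB)) → σ → QA
  consistent : ∀ h a, A.Δ (plast A B h).1 a (f h a)

/-- A partial resolver operating on the second component of the synchronized product. -/
structure PRes2 (A : BAut σ QA) (B : BAut σ QB) where
  g : List (σ × (QA × QB)) → σ → QB
  consistent : ∀ h a, B.Δ (plast A B h).2 a (g h a)

variable {A : BAut σ QA} {B : BAut σ QB}

/-- The product history induced by a conclusive pair of partial resolvers on a word. -/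
def prodHist (f : PRes1 A B) (g : PRes2 A B) (w : ℕ → σ) : ℕ → List (σ × (QA × QB))
  | 0 => []
  | n + 1 =>
    prodHist f g w n ++
      [(w n, (f.f (prodHist f g w n) (w n), g.g (prodHist f g w n) (w n)))]

/-- The unique run of the synchronized product induced by the pair `(f, g)`. -/
def prodRun (f : PRes1 A B) (g : PRes2 A B) (w : ℕ → σ) (n : ℕ) : QA × QB :=
  plast A B (prodHist f g w n)

/-- `(A×₁B)^{f,g}` accepts `w`: the product run visits accepting states of the first
component infinitely often. -/
def Acc1 (f : PRes1 A B) (g : PRes2 A B) (w : ℕ → σ) : Prop :=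
  ∃ᶠ n in atTop, A.F (prodRun f g w n).1

/-- `(A×₂B)^{f,g}` accepts `w`: the product run visits accepting states of the second
component infinitely often. -/
def Acc2 (f : PRes1 A B) (g : PRes2 A B) (w : ℕ → σ) : Prop :=
  ∃ᶠ n in atTop, B.F (prodRun f g w n).2

end BAut

/-- States of the Büchi automaton `A` of the separating example. -/
inductive SA where
  | s0 | s1 | s2 | s3 | top | bot
  deriving DecidableEq

instance : Fintype SA :=
  ⟨{.s0, .s1, .s2, .s3, .top, .bot}, fun x => by cases x <;> decide⟩

/-- Successor lists of `A` (letters: `a = true`, `b = false`):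
`s0 --a--> s1`; `s1 --a--> s2` or `s3`; `s2 --a-->` accepting sink `top`,
`s2 --b-->` rejecting sink `bot`; `s3 --b--> top`, `s3 --a--> bot`; unshown
transitions go to `bot`. -/
def Anext : SA → Bool → List SA
  | .s0, true => [.s1]
  | .s0, false => [.bot]
  | .s1, true => [.s2, .s3]
  | .s1, false => [.bot]
  | .s2, true => [.top]
  | .s2, false => [.bot]
  | .s3, true => [.bot]
  | .s3, false => [.top]
  | .top, _ => [.top]
  | .bot, _ => [.bot]

/-- The concrete Büchi automaton `A`. -/
def BA17 : BAut Bool SA where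
  init := .s0
  Δ := fun q a q' => q' ∈ Anext q a
  total := by decide
  F := fun q => q = SA.top

/-- States of the Büchi automaton `B` of the separating example. -/
inductive SB where
  | q0 | q1 | q2 | q3 | q4 | top | bot
  deriving DecidableEq

instance : Fintype SB :=
  ⟨{.q0, .q1, .q2, .q3, .q4, .top, .bot}, fun x => by cases x <;> decide⟩

/-- Successor lists of `B` (letters: `a = true`, `b = false`):
`q0 --a--> q1` or `q2`; `q1 --a--> q3`; `q2 --a--> q4`; `q3 --a-->` accepting sink
`top`, `q3 --b-->` rejecting sink `bot`; `q4 --b--> top`, `q4 --a--> bot`; unshown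
transitions go to `bot`. -/
def Bnext : SB → Bool → List SB
  | .q0, true => [.q1, .q2]
  | .q0, false => [.bot]
  | .q1, true => [.q3]
  | .q1, false => [.bot]
  | .q2, true => [.q4]
  | .q2, false => [.bot]
  | .q3, true => [.top]
  | .q3, false => [.bot]
  | .q4, true => [.bot]
  | .q4, false => [.top]
  | .top, _ => [.top]
  | .bot, _ => [.bot]

/-- The concrete Büchi automaton `B`. -/
def BB17 : BAut Bool SB where
  init := .q0
  Δ := fun q a q' => q' ∈ Bnext q a
  total := by decide
  F := fun q => q = SB.top


/-! ### Auxiliary material for the proof -/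

section Aux

open BAut

instance : Inhabited SA := ⟨.bot⟩
instance : Inhabited SB := ⟨.bot⟩

lemma hlast_hist {σ Q : Type} {A : BAut σ Q} (r : A.Resolver) (w : ℕ → σ) (n : ℕ) :
    A.hlast (r.hist w n) = r.run w n := by
  cases n with
  | zero => rfl
  | succ n =>
    simp [BAut.Resolver.hist, BAut.Resolver.run, BAut.hlast]

lemma run_succ_mem {σ Q : Type} {A : BAut σ Q} (r : A.Resolver) (w : ℕ → σ) (n : ℕ) :
    A.Δ (r.run w n) (w n) (r.run w (n + 1)) := by
  have h := r.consistent (r.hist w n) (w n)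
  rwa [hlast_hist] at h

/-- The choice function of the partial resolver on the A-component: it observes the
current B-state; at `s1` reading `a` it picks `s2` iff B is at `q1`. -/
def gfun : SB × SA → Bool → SA
  | (p1, .s1), true => if p1 = .q1 then .s2 else .s3
  | (_, q), a => (Anext q a).headI

lemma gfun_mem : ∀ (p : SB × SA) (a : Bool), gfun p a ∈ Anext p.2 a := by decide

/-- The witnessing partial resolver on the A-component of `B × A`. -/
def gA : BAut.PRes2 BB17 BA17 where
  g h a := gfun (BAut.plast BB17 BA17 h) a
  consistent h a := gfun_mem _ a

/-- Invariant: product states reachable under `gA`. -/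
def InvP (p : SB × SA) : Prop :=
  p ∈ ([(.q0, .s0), (.q1, .s1), (.q2, .s1), (.q3, .s2), (.q4, .s3), (.top, .top)] :
      List (SB × SA)) ∨ p.1 = .bot

instance : DecidablePred InvP := fun p => by unfold InvP; infer_instance

lemma InvP_step : ∀ (p : SB × SA) (a : Bool) (q' : SB),
    InvP p → q' ∈ Bnext p.1 a → InvP (q', gfun p a) := by decide

lemma InvP_top : ∀ p : SB × SA, InvP p → p.1 = .top → p.2 = .top := by decide

lemma prodRun_zero (f : BAut.PRes1 BB17 BA17) (g : BAut.PRes2 BB17 BA17) (w : ℕ → Bool) :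
    BAut.prodRun f g w 0 = (.q0, .s0) := rfl

lemma prodRun_succ (f : BAut.PRes1 BB17 BA17) (g : BAut.PRes2 BB17 BA17) (w : ℕ → Bool)
    (n : ℕ) :
    BAut.prodRun f g w (n + 1) =
      (f.f (BAut.prodHist f g w n) (w n), g.g (BAut.prodHist f g w n) (w n)) := by
  simp [BAut.prodRun, BAut.prodHist, BAut.plast]

lemma InvP_run (f : BAut.PRes1 BB17 BA17) (w : ℕ → Bool) (n : ℕ) :
    InvP (BAut.prodRun f gA w n) := by
  induction n with
  | zero => rw [prodRun_zero]; decide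
  | succ n ih =>
    rw [prodRun_succ]
    have hf := f.consistent (BAut.prodHist f gA w n) (w n)
    have hp : BAut.plast BB17 BA17 (BAut.prodHist f gA w n) = BAut.prodRun f gA w n := rfl
    rw [hp] at hf
    have hg : gA.g (BAut.prodHist f gA w n) (w n) = gfun (BAut.prodRun f gA w n) (w n) := rfl
    rw [hg]
    exact InvP_step _ _ _ ih hf

/-- The choice function for a B-resolver that picks `c` at `q0` reading `a`. -/
def fBfun (c : SB) : SB → Bool → SB
  | .q0, true => c
  | q, a => (Bnext q a).headI

lemma fBfun_mem1 : ∀ (q : SB) (a : Bool), fBfun .q1 q a ∈ Bnext q a := by decide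
lemma fBfun_mem2 : ∀ (q : SB) (a : Bool), fBfun .q2 q a ∈ Bnext q a := by decide

def fB1 : BB17.Resolver where
  f h a := fBfun .q1 (BB17.hlast h) a
  consistent h a := fBfun_mem1 _ a

def fB2 : BB17.Resolver where
  f h a := fBfun .q2 (BB17.hlast h) a
  consistent h a := fBfun_mem2 _ a

lemma fB1_run_succ (w : ℕ → Bool) (n : ℕ) :
    fB1.run w (n + 1) = fBfun .q1 (fB1.run w n) (w n) := by
  show fB1.f (fB1.hist w n) (w n) = _
  simp only [fB1, hlast_hist]

lemma fB2_run_succ (w : ℕ → Bool) (n : ℕ) :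
    fB2.run w (n + 1) = fBfun .q2 (fB2.run w n) (w n) := by
  show fB2.f (fB2.hist w n) (w n) = _
  simp only [fB2, hlast_hist]

end Aux

/-- `B` product-based blindly dominates `A`: some partial resolver
`g` on the `A`-component of `B×A` satisfies `(B×₁A)^{f,g}(w) ≤ (B×₂A)^{f,g}(w)` for
all partial resolvers `f` on the `B`-component and all words; yet `B` does not
blindly dominate `A`: for every resolver `g'` of `A` there are a resolver `f'` of `B`
and a word `w` with `B^{f'}(w) > A^{g'}(w)`. -/
theorem product_blind_dominance_not_blind_dominance :
    (∃ g : BAut.PRes2 BB17 BA17, ∀ f : BAut.PRes1 BB17 BA17, ∀ w : ℕ → Bool,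
        BAut.Acc1 f g w → BAut.Acc2 f g w) ∧
      (∀ g' : BA17.Resolver, ∃ f' : BB17.Resolver, ∃ w : ℕ → Bool,
        BB17.Acc f' w ∧ ¬ BA17.Acc g' w) := by
  constructor
  · -- Part 1: product-based blind dominance
    refine ⟨gA, fun f w h1 => ?_⟩
    refine h1.mono fun n hn => ?_
    exact InvP_top _ (InvP_run f w n) hn
  · -- Part 2: no blind dominance
    intro g'
    -- the blind choice of `g'` at `s1` after reading `a`
    set c : SA := g'.f [(true, g'.f [] true)] true with hc
    have hrun1 : ∀ w : ℕ → Bool, w 0 = true → g'.run w 1 = .s1 := by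
      intro w hw0
      have h := run_succ_mem g' w 0
      rw [show g'.run w 0 = SA.s0 from rfl, hw0] at h
      simpa [BA17, Anext] using h
    have h0 : g'.f [] true = .s1 := by
      have := hrun1 (fun _ => true) rfl
      simpa [BAut.Resolver.run, BAut.Resolver.hist] using this
    have hcmem : c ∈ Anext .s1 true := by
      have h := g'.consistent [(true, SA.s1)] true
      rw [show BA17.hlast [(true, SA.s1)] = SA.s1 from rfl] at h
      rw [hc, h0]
      exact h
    have hrun2 : ∀ w : ℕ → Bool, w 0 = true → w 1 = true → g'.run w 2 = c := by
      intro w hw0 hw1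
      show g'.f (g'.hist w 1) (w 1) = c
      have : g'.hist w 1 = [(w 0, g'.f [] (w 0))] := by
        simp [BAut.Resolver.hist]
      rw [this, hw0, hw1, hc]
    -- generic tail lemmas
    have hAbot : ∀ (w : ℕ → Bool) (m : ℕ), g'.run w m = .bot →
        ∀ k, g'.run w (m + k) = .bot := by
      intro w m hm k
      induction k with
      | zero => exact hm
      | succ k ih =>
        have h := run_succ_mem g' w (m + k)
        rw [ih] at h
        show g'.run w (m + k + 1) = .bot
        simpa [BA17, Anext] using h
    have hnotAcc : ∀ (w : ℕ → Bool), g'.run w 3 = .bot → ¬ BA17.Acc g' w := by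
      intro w h3 hacc
      obtain ⟨n, hn3, hF⟩ := Filter.frequently_atTop.mp hacc 3
      obtain ⟨k, rfl⟩ := Nat.exists_eq_add_of_le hn3
      have := hAbot w 3 h3 k
      rw [this] at hF
      simp [BA17] at hF
    rcases (by simpa [Anext] using hcmem : c = .s2 ∨ c = .s3) with h2 | h3
    · -- `g'` picks `s2`: use word `a a b b b ...` and B-resolver through `q2`
      refine ⟨fB2, fun n => decide (n < 2), ?_, ?_⟩
      · -- B accepts
        have hr3 : ∀ k, fB2.run (fun n => decide (n < 2)) (3 + k) = .top := by
          intro k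
          induction k with
          | zero =>
            rw [show (3:ℕ) = 2 + 1 from rfl, fB2_run_succ, fB2_run_succ, fB2_run_succ]
            rfl
          | succ k ih =>
            rw [show 3 + (k + 1) = (3 + k) + 1 from rfl, fB2_run_succ, ih]
            rfl
        refine Filter.frequently_atTop.mpr fun b => ⟨3 + b, by omega, ?_⟩
        rw [hr3 b]; rfl
      · -- A rejects
        refine hnotAcc _ ?_
        have h := run_succ_mem g' (fun n => decide (n < 2)) 2
        rw [hrun2 _ rfl rfl, h2] at h
        simpa [BA17, Anext] using h
    · -- `g'` picks `s3`: use word `a a a ...` and B-resolver through `q1`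
      refine ⟨fB1, fun _ => true, ?_, ?_⟩
      · have hr3 : ∀ k, fB1.run (fun _ => true) (3 + k) = .top := by
          intro k
          induction k with
          | zero =>
            rw [show (3:ℕ) = 2 + 1 from rfl, fB1_run_succ, fB1_run_succ, fB1_run_succ]
            rfl
          | succ k ih =>
            rw [show 3 + (k + 1) = (3 + k) + 1 from rfl, fB1_run_succ, ih]
            rfl
        refine Filter.frequently_atTop.mpr fun b => ⟨3 + b, by omega, ?_⟩
        rw [hr3 b]; rfl
      · refine hnotAcc _ ?_
        have h := run_succ_mem g' (fun _ => true) 2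
        rw [hrun2 _ rfl rfl, h3] at h
        simpa [BA17, Anext] using h
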